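/- If G is a finite connected graph with exactly 3 nodes, then every execution of the clustering algorithm Cluster on the node set of G produces exactly one cluster, containing all three nodes. -/

import Mathlib

/-!
Formalisation of the clustering algorithm `Cluster` from
"Optimisation by Pre-Compilation".

A graph is given by a vertex type `V` with a symmetric adjacency
relation `Adj`.  `Deg N n` is the degree of `n` within the node set `N`,
`NDeg N n` the normalised degree.  An execution of the (nondeterministic)
clustering algorithm is modelled by the inductive predicates
`Propagates` (the propagation phase growing one cluster) and
`ClusterExec` (the driver, producing the list of clusters).
-/

namespace P2P

variable {V : Type*}

/-- The degree of node `n` within the set of nodes `N`: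
the number of nodes in `N \ {n}` adjacent to `n`. -/
noncomputable def Deg (Adj : V → V → Prop) (N : Set V) (n : V) : ℕ :=
  {m ∈ N | m ≠ n ∧ Adj m n}.ncard

/-- The normalised degree of node `n` within the set of nodes `N`:
the number of nodes in `N \ {n}` adjacent to `n` whose degree exceeds `1`. -/
noncomputable def NDeg (Adj : V → V → Prop) (N : Set V) (n : V) : ℕ :=
  {m ∈ N | m ≠ n ∧ Adj m n ∧ 1 < Deg Adj N m}.ncard

/-- The extension set `I` of the propagation phase: the unclustered nodes
(of `U`) adjacent to some node `n'` of the current cluster `C` with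
`NDeg (U ∪ C) n' ≤ 2`, together with the unclustered nodes adjacent to some
node `n'` of `C` with `Deg (U ∪ C) n' = 1`. -/
def extSet (Adj : V → V → Prop) (U C : Set V) : Set V :=
  {n ∈ U | ∃ n' ∈ C, Adj n n' ∧
      (NDeg Adj (U ∪ C) n' ≤ 2 ∨ Deg Adj (U ∪ C) n' = 1)}

/-- `Propagates Adj U C C'` : starting from the set `U` of unclustered nodes
and current cluster `C`, repeatedly adding the extension set (and removing it
from the unclustered nodes) terminates with final cluster `C'`. -/
inductive Propagates (Adj : V → V → Prop) : Set V → Set V → Set V → Prop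
  | done (U C : Set V) : extSet Adj U C = ∅ → Propagates Adj U C C
  | step (U C C' : Set V) : extSet Adj U C ≠ ∅ →
      Propagates Adj (U \ extSet Adj U C) (C ∪ extSet Adj U C) C' →
      Propagates Adj U C C'

/-- `ClusterExec Adj U Cs` : one possible execution of the clustering
algorithm on the set `U` of (still unclustered) nodes, producing the list of
clusters `Cs`.  While unclustered nodes remain, a node `n` of minimal
normalised degree among the unclustered nodes is chosen, the new cluster is
started as `{n}` and grown by propagation; its nodes are removed from the
unclustered set. -/
inductive ClusterExec (Adj : V → V → Prop) : Set V → List (Set V) → Prop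
  | nil : ClusterExec Adj ∅ []
  | cons {U : Set V} {n : V} {C : Set V} {rest : List (Set V)} :
      n ∈ U →
      (∀ m ∈ U, NDeg Adj U n ≤ NDeg Adj U m) →
      Propagates Adj (U \ {n}) {n} C →
      ClusterExec Adj (U \ C) rest →
      ClusterExec Adj U (C :: rest)

/-- A graph is connected if any two nodes are joined by a chain of
adjacent nodes. -/
def Conn (Adj : V → V → Prop) : Prop :=
  ∀ a b : V, Relation.ReflTransGen Adj a b

end P2P

namespace P2P

variable {V : Type*} {Adj : V → V → Prop}

theorem NDeg_le_card_sub_one [Finite V] (N : Set V) (n : V) :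
    NDeg Adj N n ≤ Nat.card V - 1 :=
  calc NDeg Adj N n ≤ ({n}ᶜ : Set V).ncard :=
        Set.ncard_le_ncard (fun _ hm => hm.2.1) (Set.toFinite _)
    _ = Nat.card V - 1 := by rw [Set.ncard_compl, Set.ncard_singleton]

theorem extSet_subset (U C : Set V) : extSet Adj U C ⊆ U :=
  Set.sep_subset _ _

theorem Propagates.exists_final {U C C' : Set V} (h : Propagates Adj U C C') :
    ∃ U', U' ∪ C' = U ∪ C ∧ extSet Adj U' C' = ∅ ∧ C ⊆ C' := by
  induction h with
  | done U C hext => exact ⟨U, rfl, hext, subset_rfl⟩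
  | step U C C' _ _ ih =>
    obtain ⟨U', hunion, hext, hsub⟩ := ih
    refine ⟨U', hunion.trans ?_, hext, Set.subset_union_left.trans hsub⟩
    rw [← Set.union_assoc, Set.union_right_comm, Set.sdiff_union_self,
      Set.union_eq_left.mpr (extSet_subset U C)]

theorem Conn.eq_univ_of_closed (hconn : Conn Adj) {C : Set V} (hC : C.Nonempty)
    (hclosed : ∀ a b, Adj a b → b ∈ C → a ∈ C) : C = Set.univ := by
  obtain ⟨c, hc⟩ := hC
  exact Set.eq_univ_of_forall fun a =>
    Relation.ReflTransGen.head_induction_on (hconn a c) hc fun hab _ hb => hclosed _ _ hab hb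

/- When every normalised degree is at most `2`, every unclustered neighbour of the cluster
lies in the extension set, so propagation stops only once the cluster is closed under
adjacency. -/
theorem Propagates.eq_univ (hNDeg : ∀ N n, NDeg Adj N n ≤ 2) (hconn : Conn Adj)
    {U C C' : Set V} (h : Propagates Adj U C C') (hcover : U ∪ C = Set.univ)
    (hC : C.Nonempty) : C' = Set.univ := by
  obtain ⟨U', hunion, hext, hsub⟩ := h.exists_final
  refine hconn.eq_univ_of_closed (hC.mono hsub) fun a b hab hb => ?_
  have ha : a ∈ U' ∪ C' := hunion ▸ hcover ▸ Set.mem_univ a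
  refine ha.resolve_left fun haU => ?_
  have : a ∈ extSet Adj U' C' := ⟨haU, b, hb, hab, Or.inl (hNDeg _ _)⟩
  simp [hext] at this

theorem ClusterExec.eq_nil_of_empty {Cs : List (Set V)} (h : ClusterExec Adj ∅ Cs) :
    Cs = [] := by
  cases h with
  | nil => rfl
  | cons hn _ _ _ => exact absurd hn (Set.notMem_empty _)

end P2P

open P2P in
theorem cluster_card_three_general {V : Type*} [Fintype V]
    (Adj : V → V → Prop) (hconn : Conn Adj)
    (hcard : Fintype.card V = 3)
    (Cs : List (Set V)) (hexec : ClusterExec Adj Set.univ Cs) :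
    Cs = [Set.univ] := by
  have hNDeg : ∀ N n, NDeg Adj N n ≤ 2 := fun N n =>
    (NDeg_le_card_sub_one N n).trans_eq (by rw [Nat.card_eq_fintype_card, hcard])
  have : Nonempty V := Fintype.card_pos_iff.mp (by omega)
  generalize hU : (Set.univ : Set V) = U at hexec
  cases hexec with
  | nil => exact absurd hU Set.univ_nonempty.ne_empty
  | cons _ _ hprop hrest =>
    subst hU
    obtain rfl : _ = Set.univ :=
      hprop.eq_univ hNDeg hconn (by simp) (Set.singleton_nonempty _)
    rw [Set.sdiff_self] at hrest
    rw [hrest.eq_nil_of_empty]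

open P2P in
/-- If `G` is a finite connected graph with exactly `3`
nodes, then every execution of the clustering algorithm `Cluster` on the
node set of `G` produces exactly one cluster, containing all three nodes. -/
theorem cluster_card_three {V : Type*} [Fintype V]
    (Adj : V → V → Prop) (hsymm : Symmetric Adj) (hconn : Conn Adj)
    (hcard : Fintype.card V = 3)
    (Cs : List (Set V)) (hexec : ClusterExec Adj Set.univ Cs) :
    Cs = [Set.univ] :=
  cluster_card_three_general Adj hconn hcard Cs hexec
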